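/- Let r ∈ ℚ_{>1} \ ℕ (so n(r) > d(r) > 1 and S_r is atomic). Then the set of elasticities { ρ(x) : x ∈ S_r, x ≠ 0 } is dense in the real interval [1, ∞). -/

import Mathlib

/-!
Write `r = n / d` in lowest terms. Every factorization of an element `x` with `x * d ^ K ∈ ℕ`,
`d ∤ x * d ^ K` and `x < (d + 1) * r ^ K` uses `r ^ K`: modulo `d` only the top coefficient of
`x * d ^ J` survives, and a top coefficient at `J > K` divisible by `d` already contributes
`d * r ^ J = n * r ^ (J - 1) ≥ (d + 1) * r ^ K`. In particular the powers of `r` are the atoms,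
and adding to `q = n ^ k` the sparse powers `r ^ A, r ^ (2 * A), …, r ^ (P * A)` shifts every
length by `P`, giving elasticity `(q + P) / (m + P)` with `m ≤ d ^ k` the shortest length of `q`.
These values fall from `q / m ≥ (n / d) ^ k` towards `1` in steps that are small once `q` is
large, so they come within any `ε` of any `y > 1`.
-/
open Finsupp
open scoped ENNReal

/-- The Puiseux monoid (rational cyclic semiring) `S_r`, the additive submonoid of `ℚ`
generated by the nonnegative powers of `r`. -/
def S (r : ℚ) : AddSubmonoid ℚ := AddSubmonoid.closure {x : ℚ | ∃ n : ℕ, x = r ^ n}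

/-- A factorization of `x` over the powers of `r`: a finitely supported choice of
coefficients `α i` with `∑ α i * r ^ i = x`. -/
def IsFactorization (r x : ℚ) (α : ℕ →₀ ℕ) : Prop :=
  (α.sum fun i c => (c : ℚ) * r ^ i) = x

/-- The length of a factorization. -/
def flen (α : ℕ →₀ ℕ) : ℕ := α.sum fun _ c => c

/-- The set of lengths of factorizations of `x` over the powers of `r`. -/
def lengthSet (r x : ℚ) : Set ℕ :=
  {t | ∃ α : ℕ →₀ ℕ, IsFactorization r x α ∧ flen α = t}

/-- An atom of `S_r`: a nonzero element that is not the sum of two nonzero elements. -/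
def IsAtomS (r a : ℚ) : Prop :=
  a ∈ S r ∧ a ≠ 0 ∧ ¬ ∃ y z : ℚ, y ∈ S r ∧ z ∈ S r ∧ y ≠ 0 ∧ z ≠ 0 ∧ a = y + z

/-- The set of lengths of `x` as sums of atoms of `S_r`. -/
def atomLengthSet (r x : ℚ) : Set ℕ :=
  {t | ∃ f : Fin t → ℚ, (∀ i, IsAtomS r (f i)) ∧ ∑ i, f i = x}

open Classical in
/-- The elasticity of `x` in `S_r` (as an extended nonnegative real). -/
noncomputable def elast (r x : ℚ) : ℝ≥0∞ :=
  if x = 0 then 1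
  else if BddAbove (atomLengthSet r x) then
    (↑(sSup (atomLengthSet r x)) : ℝ≥0∞) / (↑(sInf (atomLengthSet r x)) : ℝ≥0∞)
  else ⊤

/-- The elasticity of the monoid `S_r`. -/
noncomputable def elastM (r : ℚ) : ℝ≥0∞ := ⨆ x ∈ S r, elast r x

section Factorizations

variable {r x y : ℚ} {α β : ℕ →₀ ℕ}

lemma isFactorization_zero_iff : IsFactorization r x 0 ↔ x = 0 := by
  simp [IsFactorization, eq_comm]

lemma IsFactorization.add (hα : IsFactorization r x α) (hβ : IsFactorization r y β) :
    IsFactorization r (x + y) (α + β) := by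
  rw [IsFactorization, sum_add_index' (by simp) (by intros; push_cast; ring), hα, hβ]

lemma isFactorization_single (r : ℚ) (i c : ℕ) :
    IsFactorization r (c * r ^ i) (single i c) :=
  sum_single_index (by simp)

lemma isFactorization_add_single_iff {i : ℕ} :
    IsFactorization r (x + r ^ i) (α + single i 1) ↔ IsFactorization r x α := by
  rw [IsFactorization, sum_add_index' (by simp) (by intros; push_cast; ring),
    sum_single_index (by simp), Nat.cast_one, one_mul, add_left_inj, IsFactorization]

lemma flen_add (α β : ℕ →₀ ℕ) : flen (α + β) = flen α + flen β :=
  sum_add_index' (fun _ => rfl) (fun _ _ _ => rfl)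

lemma flen_single (i c : ℕ) : flen (single i c) = c :=
  sum_single_index rfl

lemma flen_eq_zero_iff : flen α = 0 ↔ α = 0 := by
  simp [flen, Finsupp.sum, Finset.sum_eq_zero_iff, Finsupp.ext_iff]

lemma exists_eq_add_single_of_ne_zero {i : ℕ} (h : α i ≠ 0) : ∃ β, α = β + single i 1 :=
  ⟨α - single i 1, (tsub_add_cancel_of_le (single_le_iff.2 (Nat.one_le_iff_ne_zero.2 h))).symm⟩

lemma IsFactorization.coeff_mul_pow_le (hr : 0 < r) (hα : IsFactorization r x α) (i : ℕ) :
    α i * r ^ i ≤ x := by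
  rw [← hα]
  by_cases hi : i ∈ α.support
  · exact Finset.single_le_sum (f := fun i => (α i : ℚ) * r ^ i) (fun j _ => by positivity) hi
  · rw [notMem_support_iff.1 hi, Nat.cast_zero, zero_mul]
    exact Finset.sum_nonneg fun j _ => by positivity

lemma IsFactorization.flen_le (hr : 1 ≤ r) (hα : IsFactorization r x α) : (flen α : ℚ) ≤ x := by
  rw [← hα, flen, Finsupp.sum, Finsupp.sum, Nat.cast_sum]
  exact Finset.sum_le_sum fun i _ => le_mul_of_one_le_right (by positivity) (one_le_pow₀ hr)

lemma IsFactorization.eq_zero_iff (hr : 0 < r) (hα : IsFactorization r x α) : x = 0 ↔ α = 0 := by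
  refine ⟨fun hx => Finsupp.ext fun i => ?_, fun h => isFactorization_zero_iff.1 (h ▸ hα)⟩
  have := hα.coeff_mul_pow_le hr i
  rw [hx] at this
  have : (α i : ℚ) ≤ 0 := nonpos_of_mul_nonpos_left this (by positivity)
  simpa using this

lemma mem_S_iff : x ∈ S r ↔ ∃ α, IsFactorization r x α := by
  rw [S, show {x : ℚ | ∃ n : ℕ, x = r ^ n} = Set.range (r ^ ·) by ext; simp [eq_comm],
    AddSubmonoid.mem_closure_range_iff]
  simp [IsFactorization, eq_comm, nsmul_eq_mul]

lemma pow_mem_S (r : ℚ) (i : ℕ) : r ^ i ∈ S r :=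
  AddSubmonoid.subset_closure ⟨i, rfl⟩

end Factorizations

section Forcing

variable {r x : ℚ} {α : ℕ →₀ ℕ}

lemma den_mul_eq_natAbs_num (hr : 0 ≤ r) : (r.den : ℚ) * r = r.num.natAbs := by
  rw [mul_comm, Rat.mul_den_eq_num, Nat.cast_natAbs, Int.cast_abs,
    abs_of_nonneg (by exact_mod_cast Rat.num_nonneg.2 hr)]

lemma den_lt_natAbs_num (h1 : 1 < r) : r.den < r.num.natAbs := by
  have : (r.den : ℚ) * 1 < r.den * r := mul_lt_mul_of_pos_left h1 (by exact_mod_cast r.pos)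
  rw [mul_one, den_mul_eq_natAbs_num (by positivity)] at this
  exact_mod_cast this

lemma IsFactorization.mul_den_pow (hr : 0 ≤ r) (hα : IsFactorization r x α) {J : ℕ}
    (hJ : α.support ⊆ Finset.range (J + 1)) :
    x * r.den ^ J =
      ((∑ i ∈ Finset.range (J + 1), α i * r.num.natAbs ^ i * r.den ^ (J - i) : ℕ) : ℚ) := by
  rw [← hα, sum_of_support_subset α hJ _ (by simp), Finset.sum_mul]
  push_cast
  refine Finset.sum_congr rfl fun i hi => ?_
  rw [← den_mul_eq_natAbs_num hr, ← pow_sub_mul_pow (r.den : ℚ) (Finset.mem_range_succ_iff.1 hi)]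
  ring

lemma IsFactorization.den_dvd_iff (hr : 0 ≤ r) (hα : IsFactorization r x α) {J N : ℕ}
    (hJ : α.support ⊆ Finset.range (J + 1)) (hN : x * r.den ^ J = N) :
    r.den ∣ N ↔ r.den ∣ α J := by
  rw [hα.mul_den_pow hr hJ, Nat.cast_inj] at hN
  rw [← hN, Finset.sum_range_succ, Nat.sub_self, pow_zero, mul_one,
    Nat.dvd_add_right (Finset.dvd_sum fun i hi => ?_)]
  · exact (r.reduced.symm.pow_right J).dvd_mul_right
  · exact (dvd_pow_self _ (Nat.sub_ne_zero_of_lt (Finset.mem_range.1 hi))).mul_left _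

lemma IsFactorization.support_subset (h1 : 1 < r) (hα : IsFactorization r x α) {K N : ℕ}
    (hN : x * r.den ^ K = N) (hx : x < (r.den + 1) * r ^ K) :
    α.support ⊆ Finset.range (K + 1) := by
  intro j hj
  rw [Finset.mem_range_succ_iff]
  by_contra! hKj
  set J := α.support.max' ⟨j, hj⟩
  have hJ : α.support ⊆ Finset.range (J + 1) := fun i hi =>
    Finset.mem_range_succ_iff.2 (α.support.le_max' i hi)
  have hKJ : K < J := hKj.trans_le (α.support.le_max' j hj)
  have hNJ : x * r.den ^ J = ((N * r.den ^ (J - K) : ℕ) : ℚ) := by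
    rw [Nat.cast_mul, ← hN, Nat.cast_pow, mul_assoc, ← pow_add, Nat.add_sub_cancel' hKJ.le]
  have hdJ : r.den ∣ α J := (hα.den_dvd_iff (by positivity) hJ hNJ).1
    ((dvd_pow_self _ (Nat.sub_ne_zero_of_lt hKJ)).mul_left _)
  have hαJ : r.den ≤ α J :=
    Nat.le_of_dvd (Nat.pos_of_ne_zero (mem_support_iff.1 (α.support.max'_mem _))) hdJ
  have hdn : (r.den : ℚ) + 1 ≤ r.num.natAbs := by exact_mod_cast den_lt_natAbs_num h1
  have hrJ : (r.num.natAbs : ℚ) * r ^ (J - 1) = r.den * r ^ J := by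
    rw [← den_mul_eq_natAbs_num (by positivity), mul_assoc, ← pow_succ',
      Nat.sub_add_cancel (by omega)]
  refine lt_irrefl x (calc
    x < (r.den + 1) * r ^ K := hx
    _ ≤ r.num.natAbs * r ^ (J - 1) := by gcongr; exacts [h1.le, by omega]
    _ = r.den * r ^ J := hrJ
    _ ≤ α J * r ^ J := by gcongr
    _ ≤ x := hα.coeff_mul_pow_le (by positivity) J)

lemma IsFactorization.coeff_ne_zero (h1 : 1 < r) (hα : IsFactorization r x α) {K N : ℕ}
    (hN : x * r.den ^ K = N) (hdN : ¬ r.den ∣ N) (hx : x < (r.den + 1) * r ^ K) : α K ≠ 0 :=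
  fun h => hdN <|
    (hα.den_dvd_iff (by positivity) (hα.support_subset h1 hN hx) hN).2 (h ▸ dvd_zero _)

lemma IsFactorization.coeff_ne_zero_of_add_pow (h1 : 1 < r) (hd : r.den ≠ 1) {y : ℚ}
    {J K M : ℕ} (hJK : J < K) (hM : y * r.den ^ J = M) (hy : y < r.den * r ^ K)
    (hα : IsFactorization r (y + r ^ K) α) : α K ≠ 0 := by
  refine hα.coeff_ne_zero h1 (N := M * r.den ^ (K - J) + r.num.natAbs ^ K) ?_ ?_ (by linarith)
  · push_cast
    rw [← den_mul_eq_natAbs_num (by positivity), ← hM, mul_assoc, ← pow_add,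
      Nat.add_sub_cancel' hJK.le, mul_pow]
    ring
  · rw [Nat.dvd_add_right ((dvd_pow_self _ (Nat.sub_ne_zero_of_lt hJK)).mul_left _)]
    exact fun h => hd (Nat.Coprime.eq_one_of_dvd (r.reduced.symm.pow_right K) h)

end Forcing

section Atoms

variable {r x : ℚ} {α : ℕ →₀ ℕ}

lemma IsFactorization.flen_eq_one_of_pow (h1 : 1 < r) (hd : r.den ≠ 1) {i : ℕ}
    (hα : IsFactorization r (r ^ i) α) : flen α = 1 := by
  have hα0 : α ≠ 0 := mt (hα.eq_zero_iff (by positivity)).2 (by positivity)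
  rcases Nat.eq_zero_or_pos i with rfl | hi
  · have hle : (flen α : ℚ) ≤ 1 := by simpa using hα.flen_le h1.le
    have : flen α ≤ 1 := by exact_mod_cast hle
    have := mt flen_eq_zero_iff.1 hα0
    omega
  · rw [← zero_add (r ^ i)] at hα
    obtain ⟨β, rfl⟩ := exists_eq_add_single_of_ne_zero
      (hα.coeff_ne_zero_of_add_pow h1 hd hi (M := 0) (by simp) (by positivity))
    rw [isFactorization_add_single_iff] at hα
    rw [(hα.eq_zero_iff (by positivity)).1 rfl, zero_add, flen_single]

lemma isAtomS_iff (h1 : 1 < r) (hd : r.den ≠ 1) {a : ℚ} : IsAtomS r a ↔ ∃ i, a = r ^ i := by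
  constructor
  · rintro ⟨haS, ha0, hirr⟩
    obtain ⟨α, hα⟩ := mem_S_iff.1 haS
    obtain ⟨i, hi⟩ := support_nonempty_iff.2 (mt (hα.eq_zero_iff (by positivity)).2 ha0)
    obtain ⟨β, rfl⟩ := exists_eq_add_single_of_ne_zero (mem_support_iff.1 hi)
    rw [← sub_add_cancel a (r ^ i), isFactorization_add_single_iff] at hα
    refine ⟨i, by_contra fun h => hirr ⟨r ^ i, a - r ^ i, pow_mem_S r i, mem_S_iff.2 ⟨β, hα⟩,
      by positivity, sub_ne_zero.2 h, by ring⟩⟩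
  · rintro ⟨i, rfl⟩
    refine ⟨pow_mem_S r i, by positivity, ?_⟩
    rintro ⟨y, z, hy, hz, hy0, hz0, hyz⟩
    obtain ⟨β, hβ⟩ := mem_S_iff.1 hy
    obtain ⟨γ, hγ⟩ := mem_S_iff.1 hz
    have := ((hyz ▸ hβ.add hγ).flen_eq_one_of_pow h1 hd)
    rw [flen_add] at this
    have hβ0 := mt flen_eq_zero_iff.1 (mt (hβ.eq_zero_iff (by positivity)).2 hy0)
    have hγ0 := mt flen_eq_zero_iff.1 (mt (hγ.eq_zero_iff (by positivity)).2 hz0)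
    omega

lemma zero_mem_lengthSet_iff : 0 ∈ lengthSet r x ↔ x = 0 := by
  refine ⟨fun ⟨α, hα, h⟩ => ?_, fun h => ⟨0, isFactorization_zero_iff.2 h, rfl⟩⟩
  rwa [flen_eq_zero_iff.1 h, isFactorization_zero_iff] at hα

lemma zero_mem_atomLengthSet_iff : 0 ∈ atomLengthSet r x ↔ x = 0 := by
  simp [atomLengthSet, eq_comm]

lemma succ_mem_lengthSet_iff {t : ℕ} :
    t + 1 ∈ lengthSet r x ↔ ∃ i, t ∈ lengthSet r (x - r ^ i) := by
  constructor
  · rintro ⟨α, hα, hlen⟩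
    obtain ⟨i, hi⟩ := (support_nonempty_iff (f := α)).2 (fun h => by simp [h, flen] at hlen)
    obtain ⟨β, rfl⟩ := exists_eq_add_single_of_ne_zero (mem_support_iff.1 hi)
    rw [← sub_add_cancel x (r ^ i), isFactorization_add_single_iff] at hα
    exact ⟨i, β, hα, by rw [flen_add, flen_single] at hlen; omega⟩
  · rintro ⟨i, β, hβ, rfl⟩
    refine ⟨β + single i 1, ?_, by rw [flen_add, flen_single]⟩
    rw [← sub_add_cancel x (r ^ i), isFactorization_add_single_iff]
    exact hβ

lemma succ_mem_atomLengthSet_iff {t : ℕ} :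
    t + 1 ∈ atomLengthSet r x ↔ ∃ a, IsAtomS r a ∧ t ∈ atomLengthSet r (x - a) := by
  constructor
  · rintro ⟨f, hf, rfl⟩
    exact ⟨f 0, hf 0, Fin.tail f, fun i => hf i.succ, by rw [Fin.sum_univ_succ]; simp [Fin.tail]⟩
  · rintro ⟨a, ha, g, hg, hsum⟩
    exact ⟨Fin.cons a g, Fin.cases ha hg, by rw [Fin.sum_cons, hsum]; ring⟩

lemma atomLengthSet_eq_lengthSet (h1 : 1 < r) (hd : r.den ≠ 1) (x : ℚ) :
    atomLengthSet r x = lengthSet r x := by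
  ext t
  induction t generalizing x with
  | zero => rw [zero_mem_atomLengthSet_iff, zero_mem_lengthSet_iff]
  | succ t ih => simp [succ_mem_atomLengthSet_iff, succ_mem_lengthSet_iff, isAtomS_iff h1 hd, ih]

end Atoms

section Chain

variable {r x : ℚ}

lemma lengthSet_add_pow {K : ℕ} (h : ∀ α, IsFactorization r (x + r ^ K) α → α K ≠ 0) :
    lengthSet r (x + r ^ K) = (· + 1) '' lengthSet r x := by
  ext t
  constructor
  · rintro ⟨α, hα, rfl⟩
    obtain ⟨β, rfl⟩ := exists_eq_add_single_of_ne_zero (h α hα)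
    exact ⟨flen β, ⟨β, isFactorization_add_single_iff.1 hα, rfl⟩,
      by rw [flen_add, flen_single]⟩
  · rintro ⟨_, ⟨β, hβ, rfl⟩, rfl⟩
    exact ⟨β + single K 1, isFactorization_add_single_iff.2 hβ, by rw [flen_add, flen_single]⟩

def chain (r : ℚ) (q A : ℕ) : ℕ → ℚ
  | 0 => q
  | P + 1 => chain r q A P + r ^ (A * (P + 1))

variable {q A : ℕ}

lemma chain_mem_S (P : ℕ) : chain r q A P ∈ S r := by
  induction P with
  | zero => simpa [chain] using nsmul_mem (pow_mem_S r 0) q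
  | succ P ih => exact add_mem ih (pow_mem_S r _)

lemma chain_pos (hr : 0 < r) (hq : 0 < q) : ∀ P, 0 < chain r q A P
  | 0 => by simpa [chain]
  | P + 1 => by have := chain_pos hr hq P; rw [chain]; positivity

lemma chain_lt (h2 : 2 ≤ r ^ A) (hq : q < r ^ A) (P : ℕ) :
    chain r q A P < r ^ (A * (P + 1)) := by
  induction P with
  | zero => simpa [chain] using hq
  | succ P ih =>
    have : 0 ≤ r ^ (A * (P + 1)) := by rw [pow_mul]; positivity
    calc chain r q A (P + 1) < 2 * r ^ (A * (P + 1)) := by rw [chain]; linarith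
      _ ≤ r ^ A * r ^ (A * (P + 1)) := by gcongr
      _ = r ^ (A * (P + 1 + 1)) := by ring

lemma exists_chain_mul_den_pow (hr : 0 ≤ r) (P : ℕ) :
    ∃ M : ℕ, chain r q A P * r.den ^ (A * P) = M := by
  induction P with
  | zero => exact ⟨q, by simp [chain]⟩
  | succ P ih =>
    obtain ⟨M, hM⟩ := ih
    refine ⟨M * r.den ^ A + r.num.natAbs ^ (A * (P + 1)), ?_⟩
    push_cast
    rw [← den_mul_eq_natAbs_num hr, ← hM, chain]
    ring

lemma lengthSet_chain (h1 : 1 < r) (hd : r.den ≠ 1) (h2 : 2 ≤ r ^ A) (hq : q < r ^ A)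
    (P : ℕ) :
    lengthSet r (chain r q A P) = (· + P) '' lengthSet r q := by
  have hA : 0 < A := Nat.pos_of_ne_zero (by rintro rfl; norm_num at h2)
  induction P with
  | zero => simp [chain]
  | succ P ih =>
    obtain ⟨M, hM⟩ := exists_chain_mul_den_pow (q := q) (A := A) (zero_le_one.trans h1.le) P
    have hlt : chain r q A P < r.den * r ^ (A * (P + 1)) :=
      (chain_lt h2 hq P).trans_le (le_mul_of_one_le_left (by rw [pow_mul]; positivity)
        (by exact_mod_cast r.pos))
    rw [chain, lengthSet_add_pow fun α hα => hα.coeff_ne_zero_of_add_pow h1 hd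
      (Nat.mul_lt_mul_of_pos_left (Nat.lt_succ_self P) hA) hM hlt, ih, Set.image_image]
    simp_rw [add_assoc]

end Chain

section Elasticity

variable {r x : ℚ}

lemma elast_eq_div (hx : x ≠ 0) {a b : ℕ} (ha : IsGreatest (atomLengthSet r x) a)
    (hb : IsLeast (atomLengthSet r x) b) : elast r x = a / b := by
  rw [elast, if_neg hx, if_pos ha.bddAbove, ha.csSup_eq, hb.csInf_eq]

lemma isGreatest_lengthSet_natCast (h1 : 1 ≤ r) (q : ℕ) : IsGreatest (lengthSet r q) q :=
  ⟨⟨single 0 q, by simpa using isFactorization_single r 0 q, flen_single 0 q⟩,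
    fun _ ⟨_, hα, ht⟩ => by exact_mod_cast ht ▸ hα.flen_le h1⟩

lemma elast_chain (h1 : 1 < r) (hd : r.den ≠ 1) {q A m : ℕ} (h2 : 2 ≤ r ^ A) (hq : q < r ^ A)
    (hq0 : 0 < q) (hm : IsLeast (lengthSet r q) m) (P : ℕ) :
    elast r (chain r q A P) = ENNReal.ofReal ((q + P) / (m + P)) := by
  have hm0 : 0 < m := Nat.pos_of_ne_zero fun h =>
    hq0.ne' (by exact_mod_cast zero_mem_lengthSet_iff.1 (h ▸ hm.1))
  have hL := (atomLengthSet_eq_lengthSet h1 hd _).trans (lengthSet_chain h1 hd h2 hq P)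
  rw [elast_eq_div (chain_pos (by positivity) hq0 P).ne'
      (hL ▸ (add_left_mono (a := P)).map_isGreatest (isGreatest_lengthSet_natCast h1.le q))
      (hL ▸ (add_left_mono (a := P)).map_isLeast hm),
    ENNReal.ofReal_div_of_pos (by positivity)]
  norm_cast

lemma exists_elast_eq_div (h1 : 1 < r) (hd : r.den ≠ 1) (k : ℕ) :
    ∃ m : ℕ, 0 < m ∧ m ≤ r.den ^ k ∧ ∀ P : ℕ, ∃ x ∈ S r, x ≠ 0 ∧
      elast r x = ENNReal.ofReal (((r.num.natAbs : ℝ) ^ k + P) / (m + P)) := by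
  set q := r.num.natAbs ^ k
  have hq0 : 0 < q := pow_pos ((Nat.zero_le _).trans_lt (den_lt_natAbs_num h1)) k
  have hdk : r.den ^ k ∈ lengthSet r q := ⟨single k (r.den ^ k), by
    simpa [q, ← mul_pow, den_mul_eq_natAbs_num (zero_le_one.trans h1.le)]
      using isFactorization_single r k (r.den ^ k), flen_single _ _⟩
  have hm := isLeast_csInf ⟨_, hdk⟩
  obtain ⟨A, hA⟩ := pow_unbounded_of_one_lt (max 2 q : ℚ) h1
  refine ⟨_, Nat.pos_of_ne_zero fun h => hq0.ne' ?_, hm.2 hdk, fun P => ⟨chain r q A P,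
    chain_mem_S P, (chain_pos (by positivity) hq0 P).ne', ?_⟩⟩
  · exact_mod_cast zero_mem_lengthSet_iff.1 (h ▸ hm.1)
  · rw [elast_chain h1 hd ((le_max_left _ _).trans hA.le) ((le_max_right _ _).trans_lt hA) hq0 hm]
    push_cast [q]
    rfl

end Elasticity

lemma exists_nat_div_mem_Ico {a b y ε : ℝ} (hb : 0 < b) (hy : 1 < y) (hε : 0 < ε)
    (hyb : y * b ≤ a) (ha : y * (y + ε) ≤ ε * a) :
    ∃ P : ℕ, (a + P) / (b + P) ∈ Set.Ico y (y + ε) := by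
  obtain ⟨N, hN⟩ := exists_nat_gt (a / (y - 1))
  have hNy : a + N < y * (b + N) := by
    rw [div_lt_iff₀ (by linarith)] at hN
    nlinarith
  obtain ⟨P, hP, hP1⟩ := Nat.exists_not_and_succ_of_not_zero_of_exists
    (p := fun P : ℕ => (a + P) / (b + P) < y)
    (by simpa [le_div_iff₀ hb] using hyb) ⟨N, (div_lt_iff₀ (by positivity)).2 hNy⟩
  refine ⟨P, not_lt.1 hP, ?_⟩
  have hs : 0 < b + P := by positivity
  have hP1' : a + P + 1 < y * (b + P) + y := by
    simp only [Nat.cast_add, Nat.cast_one, ← add_assoc] at hP1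
    rw [div_lt_iff₀ (by positivity)] at hP1
    linarith
  have hys : y < ε * (b + P) := by
    have : ε * (a + 1 - y) < ε * (y * (b + P)) :=
      mul_lt_mul_of_pos_left (by linarith [(Nat.cast_nonneg P : (0 : ℝ) ≤ P)]) hε
    nlinarith
  rw [div_lt_iff₀ hs, add_mul]
  linarith

lemma Ioi_one_subset_closure_of_ratios {T : Set ℝ}
    (h : ∀ C : ℝ, ∃ a b : ℝ, 1 ≤ b ∧ C * b ≤ a ∧ ∀ P : ℕ, (a + P) / (b + P) ∈ T) :
    Set.Ioi 1 ⊆ closure T := by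
  intro y (hy : 1 < y)
  refine Metric.mem_closure_iff.2 fun ε hε => ?_
  set C := max y (y * (y + ε) / ε)
  obtain ⟨a, b, hb, hCb, hT⟩ := h C
  have hCa : C ≤ a := (le_mul_of_one_le_right (by positivity) hb).trans hCb
  obtain ⟨P, hP, hPε⟩ := exists_nat_div_mem_Ico (by positivity) hy hε
    ((mul_le_mul_of_nonneg_right (le_max_left _ _) (by positivity)).trans hCb)
    ((div_le_iff₀' hε).1 ((le_max_right _ _).trans hCa))
  exact ⟨_, hT P, by rw [Real.dist_eq, abs_sub_comm, abs_lt]; constructor <;> linarith⟩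

theorem stmt9 (r : ℚ) (h1 : 1 < r) (hd : r.den ≠ 1) :
    Set.Ici (1 : ℝ) ⊆
      closure {y : ℝ | ∃ x ∈ S r, x ≠ 0 ∧ elast r x = ENNReal.ofReal y} := by
  rw [← closure_Ioi]
  refine closure_minimal (Ioi_one_subset_closure_of_ratios fun C => ?_) isClosed_closure
  have hnd : (1 : ℝ) < r.num.natAbs / r.den := by
    rw [one_lt_div (by exact_mod_cast r.pos)]
    exact_mod_cast den_lt_natAbs_num h1
  obtain ⟨k, hk⟩ := pow_unbounded_of_one_lt C hnd
  obtain ⟨m, hm0, hmd, hT⟩ := exists_elast_eq_div h1 hd k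
  refine ⟨_, m, by exact_mod_cast hm0, ?_, hT⟩
  calc C * m ≤ ((r.num.natAbs : ℝ) / r.den) ^ k * r.den ^ k := by
        gcongr
        exact_mod_cast hmd
    _ = (r.num.natAbs : ℝ) ^ k := by rw [div_pow, div_mul_cancel₀ _ (by positivity)]
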